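/- (Lemma 6, second part) Suppose in addition that each g_k(x, θ) is linear in x (i.e., each v_k : ℝ^m → ℝ^d is a linear map) and that Y ⊆ ℝ^m is a nonempty convex set. Then for any λ ≥ 0 and positive definite Σ, S(λ, Y; Σ) = (⋂_{k=1}^K (λU_Σ + C_k^+(Y))) ∩ (⋂_{k=1}^K (λU_Σ + C_k^−(Y))), where + denotes Minkowski sum. -/

import Mathlib

open MeasureTheory ProbabilityTheory Matrix
open scoped ENNReal Pointwise

/-- The ellipsoid `U_Σ = {u : uᵀ Σ⁻¹ u ≤ 1}`. -/
def USet {d : ℕ} (Sg : Matrix (Fin d) (Fin d) ℝ) : Set (Fin d → ℝ) :=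
  {u | u ⬝ᵥ (Sg⁻¹ *ᵥ u) ≤ 1}

/-- `r_k(x; Σ) = max_{u ∈ U_Σ} g_k(x, u)` where `g_k(x, θ) = θᵀ v_k(x)`. -/
noncomputable def rk {d m K : ℕ} (v : Fin K → (Fin m → ℝ) → (Fin d → ℝ))
    (k : Fin K) (x : Fin m → ℝ) (Sg : Matrix (Fin d) (Fin d) ℝ) : ℝ :=
  sSup ((fun u => u ⬝ᵥ v k x) '' USet Sg)

/-- `S(λ, Y; Σ)`, the set of parameter errors that are uniformly small over `Y`. -/
noncomputable def SErr {d m K : ℕ} (v : Fin K → (Fin m → ℝ) → (Fin d → ℝ))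
    (lam : ℝ) (Y : Set (Fin m → ℝ)) (Sg : Matrix (Fin d) (Fin d) ℝ) : Set (Fin d → ℝ) :=
  {Δ | ∀ k, ∀ y ∈ Y, |Δ ⬝ᵥ v k y| ≤ lam * rk v k y Sg}

/-- Feasibility for the robust optimization problem with scale `lam`, center `θ`, shape `Σ`. -/
def Feasible {d m K : ℕ} (X : Set (Fin m → ℝ)) (v : Fin K → (Fin m → ℝ) → (Fin d → ℝ))
    (lam : ℝ) (θ : Fin d → ℝ) (Sg : Matrix (Fin d) (Fin d) ℝ) (x : Fin m → ℝ) : Prop :=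
  x ∈ X ∧ ∀ k, ∀ u ∈ USet Sg, 0 ≤ (θ + lam • u) ⬝ᵥ v k x

/-- Optimal solution of the robust optimization problem. -/
def IsOptimal {d m K : ℕ} (X : Set (Fin m → ℝ)) (f : (Fin m → ℝ) → ℝ)
    (v : Fin K → (Fin m → ℝ) → (Fin d → ℝ))
    (lam : ℝ) (θ : Fin d → ℝ) (Sg : Matrix (Fin d) (Fin d) ℝ) (x : Fin m → ℝ) : Prop :=
  Feasible X v lam θ Sg x ∧ ∀ y, Feasible X v lam θ Sg y → f x ≤ f y

open Classical in
/-- The true objective `f*`, which is `∞` when a true constraint is violated. -/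
noncomputable def fStar {d m K : ℕ} (f : (Fin m → ℝ) → ℝ)
    (v : Fin K → (Fin m → ℝ) → (Fin d → ℝ)) (θs : Fin d → ℝ) (x : Fin m → ℝ) : EReal :=
  if ∀ k, 0 ≤ θs ⬝ᵥ v k x then (f x : EReal) else ⊤

/-- The standard Gaussian measure on `ℝ^d`. -/
noncomputable def stdGaussian (d : ℕ) : Measure (Fin d → ℝ) :=
  Measure.pi fun _ => gaussianReal 0 1

open Classical in
/-- The positive semidefinite square root (junk value `0` off the psd cone). -/
noncomputable def matSqrt {d : ℕ} (A : Matrix (Fin d) (Fin d) ℝ) : Matrix (Fin d) (Fin d) ℝ :=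
  if h : A.PosSemidef then
    h.1.eigenvectorUnitary.1 * diagonal ((↑) ∘ (h.1.eigenvalues · |>.sqrt)) *
      (star h.1.eigenvectorUnitary : Matrix (Fin d) (Fin d) ℝ) else 0

/-- The centered Gaussian measure on `ℝ^d` with covariance `A`. -/
noncomputable def gaussOf {d : ℕ} (A : Matrix (Fin d) (Fin d) ℝ) : Measure (Fin d → ℝ) :=
  (stdGaussian d).map (fun z => matSqrt A *ᵥ z)

/-- The Euclidean norm on `Fin d → ℝ`. -/
noncomputable def euclNorm {d : ℕ} (z : Fin d → ℝ) : ℝ := Real.sqrt (∑ i, z i ^ 2)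

/-- Quantile function of the chi distribution with `d` degrees of freedom. -/
noncomputable def chiQuantile (d : ℕ) (p : ℝ) : ℝ :=
  sInf {t : ℝ | 0 ≤ t ∧ p ≤ (stdGaussian d {z | euclNorm z ≤ t}).toReal}

/-- The minimum spatial uniform bound `μ(p, Y; P, Σ)` (`⊤` when infeasible, `0` for `p ≤ 0`). -/
noncomputable def muB {d m K : ℕ} (v : Fin K → (Fin m → ℝ) → (Fin d → ℝ)) (p : ℝ)
    (Y : Set (Fin m → ℝ)) (P : Measure (Fin d → ℝ)) (Sg : Matrix (Fin d) (Fin d) ℝ) : ℝ≥0∞ :=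
  ⨅ (μ : ℝ) (_ : 0 ≤ μ ∧ ENNReal.ofReal p ≤ P (SErr v μ Y Sg)), ENNReal.ofReal μ

/-- The polar cone `C_k^+(Y) = {Δ : Δᵀ v_k(y) ≥ 0 for all y ∈ Y}`. -/
def Cplus {d m K : ℕ} (v : Fin K → (Fin m → ℝ) → (Fin d → ℝ)) (k : Fin K)
    (Y : Set (Fin m → ℝ)) : Set (Fin d → ℝ) :=
  {Δ | ∀ y ∈ Y, 0 ≤ Δ ⬝ᵥ v k y}

/-- The dual cone `C_k^−(Y) = {Δ : Δᵀ v_k(y) ≤ 0 for all y ∈ Y}`. -/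
def Cminus {d m K : ℕ} (v : Fin K → (Fin m → ℝ) → (Fin d → ℝ)) (k : Fin K)
    (Y : Set (Fin m → ℝ)) : Set (Fin d → ℝ) :=
  {Δ | ∀ y ∈ Y, Δ ⬝ᵥ v k y ≤ 0}

/-! Write `Σ = Bᵀ B`. The change of variables `u ↦ B⁻ᵀ u` maps `U_Σ` onto the Euclidean unit
ball and turns `Δ ⬝ w` into `⟪B⁻ᵀ Δ, B w⟫`, so `r_k(y; Σ) ≤ ‖B v_k(y)‖`; together with the
symmetry of `U_Σ` this gives the inclusion of the Minkowski sums in `S(λ, Y; Σ)`.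
Conversely, for `x = B⁻ᵀ Δ` the bound `-λ ‖w‖ ≤ ⟪x, w⟫` on the convex set `W = B v_k(Y)` extends
to the closed cone generated by `-W`, and the Moreau decomposition of `x` with respect to that cone splits
`x = p + (x - p)` with `‖p‖ ≤ λ` and `x - p` in the dual cone of `W`. The upper bounds reduce to
the lower ones since `C_k^- = -C_k^+` and `U_Σ = -U_Σ`. -/

open scoped RealInnerProductSpace

section Hilbert

variable {F : Type*} [NormedAddCommGroup F] [InnerProductSpace ℝ F] [CompleteSpace F]

theorem ConvexCone.exists_moreau_decomposition (K : ConvexCone ℝ F) (hne : (K : Set F).Nonempty)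
    (hK : IsClosed (K : Set F)) (x : F) :
    ∃ p ∈ K, ⟪x - p, p⟫ = 0 ∧ ∀ z ∈ K, ⟪x - p, z⟫ ≤ 0 := by
  obtain ⟨p, hpK, hp⟩ :=
    exists_norm_eq_iInf_of_complete_convex hne hK.isComplete K.convex x
  rw [norm_eq_iInf_iff_real_inner_le_zero K.convex hpK] at hp
  have hscale : ∀ t : ℝ, 0 < t → (t - 1) * ⟪x - p, p⟫ ≤ 0 := fun t ht => by
    have hdiff : t • p - p = (t - 1) • p := by rw [sub_smul, one_smul]
    simpa only [hdiff, inner_smul_right] using hp _ (K.smul_mem ht hpK)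
  have horth : ⟪x - p, p⟫ = 0 := by
    linarith [hscale 2 two_pos, hscale (1 / 2) one_half_pos]
  refine ⟨p, hpK, horth, fun z hz => ?_⟩
  simpa only [inner_sub_right, horth, sub_zero] using hp z hz

theorem exists_norm_le_forall_inner_sub_nonneg {W : Set F} (hWne : W.Nonempty)
    (hWc : Convex ℝ W) {lam : ℝ} (hlam : 0 ≤ lam) {x : F}
    (h : ∀ w ∈ W, -(lam * ‖w‖) ≤ ⟪x, w⟫) :
    ∃ b : F, ‖b‖ ≤ lam ∧ ∀ w ∈ W, 0 ≤ ⟪x - b, w⟫ := by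
  set K := (ConvexCone.hull ℝ (-W)).closure
  have hnegW : ∀ w ∈ W, -w ∈ K := fun w hw =>
    subset_closure (ConvexCone.subset_hull (Set.neg_mem_neg.mpr hw))
  have hK : ∀ z ∈ K, ⟪x, z⟫ ≤ lam * ‖z‖ := by
    refine fun z hz => closure_minimal (fun z hz => ?_)
      (isClosed_le (g := fun z => lam * ‖z‖) (by fun_prop) (by fun_prop)) hz
    obtain ⟨r, hr, w, hw, rfl⟩ := (ConvexCone.mem_hull_of_convex hWc.neg).mp hz
    have := h (-w) hw
    rw [norm_neg, inner_neg_right] at this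
    simp only [Set.mem_ofPred_eq, norm_smul, Real.norm_of_nonneg hr.le, inner_smul_right]
    nlinarith
  obtain ⟨p, hpK, horth, hpolar⟩ := K.exists_moreau_decomposition
    (hWne.neg.mono (subset_closure.trans' ConvexCone.subset_hull)) isClosed_closure x
  refine ⟨p, ?_, fun w hw => ?_⟩
  · have hnorm : ‖p‖ ^ 2 ≤ lam * ‖p‖ := by
      rw [← real_inner_self_eq_norm_sq]
      linarith [hK p hpK, inner_sub_left (𝕜 := ℝ) x p p]
    nlinarith [norm_nonneg p]
  · simpa [inner_neg_right] using hpolar _ (hnegW w hw)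

end Hilbert

section Ellipsoid

theorem Matrix.PosDef.exists_eq_transpose_mul_self {n : Type*} [Fintype n] [DecidableEq n]
    {Sg : Matrix n n ℝ} (hSg : Sg.PosDef) : ∃ B : Matrix n n ℝ, IsUnit B.det ∧ Sg = Bᵀ * B := by
  open scoped MatrixOrder in
  obtain ⟨B, rfl⟩ := CStarAlgebra.nonneg_iff_eq_star_mul_self.mp hSg.posSemidef.nonneg
  refine ⟨B, ?_, rfl⟩
  have hdet := hSg.det_pos
  rw [star_eq_conjTranspose, det_mul, det_conjTranspose, star_trivial] at hdet
  exact isUnit_iff_ne_zero.mpr fun h => by simp [h] at hdet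

theorem inner_toLp_inv_transpose_mulVec_toLp_mulVec {n : Type*} [Fintype n] [DecidableEq n]
    {B : Matrix n n ℝ} (hB : IsUnit B.det) (u w : n → ℝ) :
    ⟪WithLp.toLp 2 (B⁻¹ᵀ *ᵥ u), WithLp.toLp 2 (B *ᵥ w)⟫ = u ⬝ᵥ w := by
  rw [EuclideanSpace.inner_toLp_toLp, star_trivial, dotProduct_comm, dotProduct_mulVec,
    ← mulVec_transpose, mulVec_mulVec, transpose_nonsing_inv,
    mul_nonsing_inv _ ((det_transpose B).symm ▸ hB), one_mulVec]

variable {d : ℕ} {Sg B : Matrix (Fin d) (Fin d) ℝ}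

theorem zero_mem_USet : (0 : Fin d → ℝ) ∈ USet Sg := by
  simp [USet]

theorem neg_USet : -USet Sg = USet Sg := by
  ext u
  simp [USet, mulVec_neg]

theorem mem_USet_transpose_mul_self_iff (u : Fin d → ℝ) :
    u ∈ USet (Bᵀ * B) ↔ ‖WithLp.toLp 2 (B⁻¹ᵀ *ᵥ u)‖ ≤ 1 := by
  rw [← sq_le_one_iff₀ (norm_nonneg _), ← real_inner_self_eq_norm_sq,
    EuclideanSpace.inner_toLp_toLp, star_trivial, USet, Set.mem_ofPred_eq, Matrix.mul_inv_rev,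
    ← mulVec_mulVec, dotProduct_mulVec, ← mulVec_transpose, transpose_nonsing_inv]

theorem dotProduct_le_norm_of_mem_USet (hB : IsUnit B.det) {u : Fin d → ℝ}
    (hu : u ∈ USet (Bᵀ * B)) (w : Fin d → ℝ) : u ⬝ᵥ w ≤ ‖WithLp.toLp 2 (B *ᵥ w)‖ := by
  rw [mem_USet_transpose_mul_self_iff] at hu
  calc u ⬝ᵥ w = ⟪WithLp.toLp 2 (B⁻¹ᵀ *ᵥ u), WithLp.toLp 2 (B *ᵥ w)⟫ :=
        (inner_toLp_inv_transpose_mulVec_toLp_mulVec hB u w).symm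
    _ ≤ ‖WithLp.toLp 2 (B⁻¹ᵀ *ᵥ u)‖ * ‖WithLp.toLp 2 (B *ᵥ w)‖ := real_inner_le_norm _ _
    _ ≤ ‖WithLp.toLp 2 (B *ᵥ w)‖ := mul_le_of_le_one_left (norm_nonneg _) hu

theorem sSup_dotProduct_USet_le_norm (hB : IsUnit B.det) (w : Fin d → ℝ) :
    sSup ((· ⬝ᵥ w) '' USet (Bᵀ * B)) ≤ ‖WithLp.toLp 2 (B *ᵥ w)‖ :=
  csSup_le (Set.image_nonempty.mpr ⟨0, zero_mem_USet⟩)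
    (Set.forall_mem_image.mpr fun _ hu => dotProduct_le_norm_of_mem_USet hB hu w)

theorem transpose_mulVec_mem_smul_USet (hB : IsUnit B.det) {lam : ℝ} (hlam : 0 ≤ lam)
    {b : EuclideanSpace ℝ (Fin d)} (hb : ‖b‖ ≤ lam) : Bᵀ *ᵥ b.ofLp ∈ lam • USet (Bᵀ * B) := by
  rcases hlam.eq_or_lt with rfl | hpos
  · rw [norm_le_zero_iff.mp hb, WithLp.ofLp_zero, mulVec_zero]
    exact Set.zero_mem_smul_set zero_mem_USet
  rw [Set.mem_smul_set_iff_inv_smul_mem₀ hpos.ne', mem_USet_transpose_mul_self_iff, mulVec_smul,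
    mulVec_mulVec, ← transpose_mul, mul_nonsing_inv _ hB, transpose_one, one_mulVec]
  change ‖lam⁻¹ • b‖ ≤ 1
  rw [norm_smul, Real.norm_of_nonneg (inv_nonneg.mpr hlam)]
  exact inv_mul_le_one_of_le₀ hb hlam

theorem dotProduct_le_sSup_USet (hSg : Sg.PosDef) {u : Fin d → ℝ} (hu : u ∈ USet Sg)
    (w : Fin d → ℝ) : u ⬝ᵥ w ≤ sSup ((· ⬝ᵥ w) '' USet Sg) := by
  obtain ⟨B, hB, rfl⟩ := hSg.exists_eq_transpose_mul_self
  refine le_csSup ⟨‖WithLp.toLp 2 (B *ᵥ w)‖, ?_⟩ (Set.mem_image_of_mem _ hu)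
  exact Set.forall_mem_image.mpr fun u hu => dotProduct_le_norm_of_mem_USet hB hu w

theorem neg_sSup_USet_le_dotProduct (hSg : Sg.PosDef) {u : Fin d → ℝ} (hu : u ∈ USet Sg)
    (w : Fin d → ℝ) : -sSup ((· ⬝ᵥ w) '' USet Sg) ≤ u ⬝ᵥ w := by
  have hneg : -u ∈ USet Sg := by
    rw [← neg_USet]
    exact Set.neg_mem_neg.mpr hu
  have := dotProduct_le_sSup_USet hSg hneg w
  rw [neg_dotProduct] at this
  linarith

theorem mem_smul_USet_add_dualCone_iff (hSg : Sg.PosDef) {W : Set (Fin d → ℝ)}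
    (hWne : W.Nonempty) (hWc : Convex ℝ W) {lam : ℝ} (hlam : 0 ≤ lam) {Δ : Fin d → ℝ} :
    Δ ∈ lam • USet Sg + {c | ∀ w ∈ W, 0 ≤ c ⬝ᵥ w} ↔
      ∀ w ∈ W, -(lam * sSup ((· ⬝ᵥ w) '' USet Sg)) ≤ Δ ⬝ᵥ w := by
  constructor
  · rintro ⟨_, ⟨u, hu, rfl⟩, c, hc, rfl⟩ w hw
    have := mul_le_mul_of_nonneg_left (neg_sSup_USet_le_dotProduct hSg hu w) hlam
    rw [add_dotProduct, smul_dotProduct, smul_eq_mul]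
    linarith [hc w hw]
  · intro h
    obtain ⟨B, hB, rfl⟩ := hSg.exists_eq_transpose_mul_self
    have hinner := inner_toLp_inv_transpose_mulVec_toLp_mulVec hB
    have hlinear : IsLinearMap ℝ fun w : Fin d → ℝ => WithLp.toLp 2 (B *ᵥ w) :=
      ⟨fun a b => by rw [mulVec_add]; rfl, fun c a => by rw [mulVec_smul]; rfl⟩
    obtain ⟨b, hb, hbW⟩ := exists_norm_le_forall_inner_sub_nonneg (hWne.image _)
      (hWc.is_linear_image hlinear) hlam (x := WithLp.toLp 2 (B⁻¹ᵀ *ᵥ Δ))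
      (Set.forall_mem_image.mpr fun w hw => by
        rw [hinner]
        nlinarith [h w hw, sSup_dotProduct_USet_le_norm hB w])
    refine ⟨_, transpose_mulVec_mem_smul_USet hB hlam hb, Δ - Bᵀ *ᵥ b.ofLp, fun w hw => ?_,
      add_sub_cancel _ _⟩
    have hbw : ⟪b, WithLp.toLp 2 (B *ᵥ w)⟫ = (Bᵀ *ᵥ b.ofLp) ⬝ᵥ w := by
      rw [mulVec_transpose, ← dotProduct_mulVec, dotProduct_comm]
      rfl
    have := hbW _ (Set.mem_image_of_mem _ hw)
    rwa [inner_sub_left, hinner, hbw, ← sub_dotProduct] at this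

end Ellipsoid

section Cones

variable {d m K : ℕ} {v : Fin K → (Fin m → ℝ) → (Fin d → ℝ)} {k : Fin K}
  {Y : Set (Fin m → ℝ)} {Sg : Matrix (Fin d) (Fin d) ℝ} {lam : ℝ} {Δ : Fin d → ℝ}

theorem mem_smul_USet_add_Cplus_iff (hSg : Sg.PosDef) (hlin : IsLinearMap ℝ (v k))
    (hYne : Y.Nonempty) (hYconv : Convex ℝ Y) (hlam : 0 ≤ lam) :
    Δ ∈ lam • USet Sg + Cplus v k Y ↔ ∀ y ∈ Y, -(lam * rk v k y Sg) ≤ Δ ⬝ᵥ v k y := by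
  have hC : Cplus v k Y = {c | ∀ w ∈ v k '' Y, 0 ≤ c ⬝ᵥ w} := by
    simp only [Cplus, Set.forall_mem_image]
  rw [hC, mem_smul_USet_add_dualCone_iff hSg (hYne.image _) (hYconv.is_linear_image hlin) hlam,
    Set.forall_mem_image]
  rfl

theorem Cminus_eq_neg_Cplus : Cminus v k Y = -Cplus v k Y := by
  ext Δ
  simp [Cminus, Cplus, neg_dotProduct]

theorem mem_smul_USet_add_Cminus_iff (hSg : Sg.PosDef) (hlin : IsLinearMap ℝ (v k))
    (hYne : Y.Nonempty) (hYconv : Convex ℝ Y) (hlam : 0 ≤ lam) :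
    Δ ∈ lam • USet Sg + Cminus v k Y ↔ ∀ y ∈ Y, Δ ⬝ᵥ v k y ≤ lam * rk v k y Sg := by
  rw [Cminus_eq_neg_Cplus, ← neg_USet, Set.smul_set_neg, ← neg_add, Set.mem_neg,
    mem_smul_USet_add_Cplus_iff hSg hlin hYne hYconv hlam]
  simp only [neg_dotProduct, neg_le_neg_iff]

end Cones

theorem stmt6_general {d m K : ℕ}
    (v : Fin K → (Fin m → ℝ) → (Fin d → ℝ))
    (hlin : ∀ k, IsLinearMap ℝ (v k))
    (Y : Set (Fin m → ℝ)) (hYne : Y.Nonempty) (hYconv : Convex ℝ Y)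
    (lam : ℝ) (hlam : 0 ≤ lam)
    (Sg : Matrix (Fin d) (Fin d) ℝ) (hSg : Sg.PosDef) :
    SErr v lam Y Sg =
      (⋂ k, (lam • USet Sg + Cplus v k Y)) ∩ (⋂ k, (lam • USet Sg + Cminus v k Y)) := by
  ext Δ
  simp only [SErr, Set.mem_ofPred_eq, Set.mem_inter_iff, Set.mem_iInter, abs_le,
    mem_smul_USet_add_Cplus_iff hSg (hlin _) hYne hYconv hlam,
    mem_smul_USet_add_Cminus_iff hSg (hlin _) hYne hYconv hlam, imp_and, forall_and]

/-- Lemma 6, second part: when each `g_k` is linear in `x` and `Y` is a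
nonempty convex set, `S(λ, Y; Σ)` is the displayed intersection of Minkowski sums. -/
theorem stmt6 {d m K : ℕ} (hd : 1 ≤ d) (hm : 1 ≤ m) (hK : 1 ≤ K)
    (v : Fin K → (Fin m → ℝ) → (Fin d → ℝ))
    (hlin : ∀ k, IsLinearMap ℝ (v k))
    (Y : Set (Fin m → ℝ)) (hYne : Y.Nonempty) (hYconv : Convex ℝ Y)
    (lam : ℝ) (hlam : 0 ≤ lam)
    (Sg : Matrix (Fin d) (Fin d) ℝ) (hSg : Sg.PosDef) :
    SErr v lam Y Sg =
      (⋂ k, (lam • USet Sg + Cplus v k Y)) ∩ (⋂ k, (lam • USet Sg + Cminus v k Y)) :=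
  stmt6_general v hlin Y hYne hYconv lam hlam Sg hSg
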